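/- Let (Ω,p,d) be a countable metric space with Markov kernel p such that every probability measure of the form p(x,·) is supported on a set of diameter at most Δ, and suppose the coarse Ricci curvature is at least 1/α > 0. Then the unique stationary measure π satisfies the Gaussian concentration property: ∫ e^g dπ ≤ exp( ∫ g dπ + (Δ²α/(8(2−1/α)))·‖g‖_Lip² ) for every Lipschitz g : Ω → ℝ. -/

import Mathlib

open scoped BigOperators

noncomputable section

/-- A probability mass function on a (countable) space. -/
def IsProb {Ω : Type*} (μ : Ω → ℝ) : Prop :=
  (∀ x, 0 ≤ μ x) ∧ HasSum μ 1

/-- A coupling of two probability mass functions. -/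
def IsCoupling {Ω : Type*} (γ : Ω × Ω → ℝ) (μ ν : Ω → ℝ) : Prop :=
  (∀ z, 0 ≤ γ z) ∧ (∀ x, HasSum (fun y => γ (x, y)) (μ x)) ∧
    (∀ y, HasSum (fun x => γ (x, y)) (ν y))

/-- Wasserstein 1-distance with cost `d`: infimum of the expected cost over couplings. -/
def W1 {Ω : Type*} (d : Ω → Ω → ℝ) (μ ν : Ω → ℝ) : ℝ :=
  sInf { r | ∃ γ, IsCoupling γ μ ν ∧ HasSum (fun z : Ω × Ω => γ z * d z.1 z.2) r }

/-- Relative entropy (Kullback divergence) `H(ν‖μ)` on a countable space. -/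
def relent {Ω : Type*} (ν μ : Ω → ℝ) : ℝ :=
  ∑' x, ν x * Real.log (ν x / μ x)

/-- Absolute continuity of pmfs. -/
def AC {Ω : Type*} (ν μ : Ω → ℝ) : Prop := ∀ x, ν x ≠ 0 → μ x ≠ 0

/-- `f` is `L`-Lipschitz with respect to the cost `d`. -/
def LipWith {Ω : Type*} (d : Ω → Ω → ℝ) (L : ℝ) (f : Ω → ℝ) : Prop :=
  ∀ x y, |f x - f y| ≤ L * d x y

/-- The Lipschitz seminorm `‖f‖_Lip` (least Lipschitz constant). -/
def lipNorm {Ω : Type*} (d : Ω → Ω → ℝ) (f : Ω → ℝ) : ℝ :=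
  sInf { L | 0 ≤ L ∧ LipWith d L f }

/-- Gaussian concentration property with constant `c`. -/
def GaussConc {Ω : Type*} (d : Ω → Ω → ℝ) (μ : Ω → ℝ) (c : ℝ) : Prop :=
  ∀ (f : Ω → ℝ) (L : ℝ), 0 ≤ L → LipWith d L f →
    Summable (fun x => μ x * f x) → Summable (fun x => μ x * Real.exp (f x)) →
    (∑' x, μ x * Real.exp (f x)) ≤ Real.exp ((∑' x, μ x * f x) + c * L ^ 2)

/-!
Write `P` for the Markov operator `(P h)(x) = ∑ p(x,y) h(y)` and `κ = 1 - 1/α`. Coupling `p(x,·)`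
with `p(y,·)` shows that `P` maps `L`-Lipschitz functions to `κL`-Lipschitz ones, and stationarity
gives `∑ π e^h = ∑ π P(e^h)`. As `p(x,·)` lives on a set of diameter `Δ`, Hoeffding's lemma gives
`P(e^h) ≤ exp (P h + (LΔ)²/8)` for `L`-Lipschitz `h`, so by induction
`∑ π e^f ≤ exp ((LΔ)²/8 · ∑_{j<k} κ^{2j}) · ∑ π e^{P^k f}`.
When `k → ∞` the Lipschitz constants `κ^k L` tend to `0`, so `P^k f` tends pointwise to its
`π`-mean `∑ π f`, while `∑_j κ^{2j} = 1/(1 - κ²) = α/(2 - 1/α)`.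
Unbounded `f` are reached by truncation.
-/

open MeasureTheory ProbabilityTheory Filter Topology

namespace IsProb

variable {ι : Type*} {μ : ι → ℝ}

theorem exists_ne_zero (hμ : IsProb μ) : ∃ i, μ i ≠ 0 := by
  by_contra! h
  obtain rfl : μ = 0 := funext h
  exact one_ne_zero (hμ.2.unique hasSum_zero)

theorem tsum_mul_const (hμ : IsProb μ) (c : ℝ) : ∑' i, μ i * c = c := by
  rw [tsum_mul_right, hμ.2.tsum_eq, one_mul]

theorem summable_mul {M : ℝ} {h : ι → ℝ} (hμ : IsProb μ) (hb : ∀ i, |h i| ≤ M) :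
    Summable fun i => μ i * h i :=
  Summable.of_norm_bounded (hμ.2.summable.mul_right M) fun i => by
    rw [norm_mul, Real.norm_of_nonneg (hμ.1 i)]
    exact mul_le_mul_of_nonneg_left (hb i) (hμ.1 i)

theorem tsum_mul_le_tsum_mul {M M' : ℝ} {g h : ι → ℝ} (hμ : IsProb μ) (hg : ∀ i, |g i| ≤ M)
    (hh : ∀ i, |h i| ≤ M') (hgh : ∀ i, g i ≤ h i) : ∑' i, μ i * g i ≤ ∑' i, μ i * h i :=
  (hμ.summable_mul hg).tsum_le_tsum (fun i => mul_le_mul_of_nonneg_left (hgh i) (hμ.1 i))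
    (hμ.summable_mul hh)

theorem abs_tsum_mul_le {M : ℝ} {h : ι → ℝ} (hμ : IsProb μ) (hb : ∀ i, |h i| ≤ M) :
    |∑' i, μ i * h i| ≤ M := by
  have hc : ∀ c : ℝ, ∀ i : ι, |c| ≤ |c| := fun _ _ => le_rfl
  rw [abs_le]
  constructor
  · calc -M = ∑' i, μ i * -M := (hμ.tsum_mul_const _).symm
      _ ≤ _ := hμ.tsum_mul_le_tsum_mul (hc _) hb fun i => neg_le_of_abs_le (hb i)
  · calc ∑' i, μ i * h i ≤ ∑' i, μ i * M :=
          hμ.tsum_mul_le_tsum_mul hb (hc _) fun i => le_of_abs_le (hb i)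
      _ = M := hμ.tsum_mul_const M

theorem tsum_mul_exp_le_of_mem_Icc (hμ : IsProb μ) {h : ι → ℝ} {a b : ℝ}
    (hab : ∀ i, μ i ≠ 0 → h i ∈ Set.Icc a b) :
    ∑' i, μ i * Real.exp (h i) ≤ Real.exp (∑' i, μ i * h i + (b - a) ^ 2 / 8) := by
  let _ : MeasurableSpace ι := ⊤
  have hsum : HasSum (fun i => ENNReal.ofReal (μ i)) 1 := by
    rw [← ENNReal.ofReal_one, ← hμ.2.tsum_eq, ENNReal.ofReal_tsum_of_nonneg hμ.1 hμ.2.summable]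
    exact ENNReal.summable.hasSum
  let P : PMF ι := ⟨_, hsum⟩
  have hP : ∀ i, P i = ENNReal.ofReal (μ i) := fun _ => rfl
  have hint : ∀ g : ι → ℝ, Integrable g P.toMeasure →
      ∫ i, g i ∂P.toMeasure = ∑' i, μ i * g i := fun g hg => by
    rw [P.integral_eq_tsum g hg]
    exact tsum_congr fun i => by rw [hP, ENNReal.toReal_ofReal (hμ.1 i), smul_eq_mul]
  have hIcc : ∀ᵐ i ∂P.toMeasure, h i ∈ Set.Icc a b := by
    rw [ae_iff, P.toMeasure_apply_eq_zero_iff trivial]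
    refine Set.disjoint_left.2 fun i hi hout => hout (hab i fun h0 => hi ?_)
    rw [hP, h0, ENNReal.ofReal_zero]
  have hmeas : AEMeasurable h P.toMeasure := measurable_from_top.aemeasurable
  have hsub := hasSubgaussianMGF_of_mem_Icc hmeas hIcc
  set m := ∫ i, h i ∂P.toMeasure
  have hmgf : ∫ i, Real.exp (h i - m) ∂P.toMeasure ≤ Real.exp ((b - a) ^ 2 / 8) := by
    convert hsub.mgf_le 1 using 2
    · simp [mgf]
    · simp only [NNReal.coe_pow, NNReal.coe_div, coe_nnnorm, Real.norm_eq_abs, one_pow, mul_one]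
      rw [div_pow, sq_abs]; push_cast; ring
  have hexp : Integrable (fun i => Real.exp (h i)) P.toMeasure := by
    simpa [Real.exp_sub, div_mul_cancel₀ _ (Real.exp_pos m).ne'] using
      (hsub.integrable_exp_mul 1).mul_const (Real.exp m)
  calc ∑' i, μ i * Real.exp (h i) = Real.exp m * ∫ i, Real.exp (h i - m) ∂P.toMeasure := by
        simp only [Real.exp_sub, ← hint _ hexp, integral_div,
          mul_div_cancel₀ _ (Real.exp_pos m).ne']
    _ ≤ Real.exp m * Real.exp ((b - a) ^ 2 / 8) := by gcongr
    _ = Real.exp (∑' i, μ i * h i + (b - a) ^ 2 / 8) := by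
        rw [← Real.exp_add, ← hint h (Integrable.of_mem_Icc a b hmeas hIcc)]

theorem tsum_mul_exp_le_of_sub_le (hμ : IsProb μ) {h : ι → ℝ} {ℓ : ℝ}
    (hosc : ∀ i j, μ i ≠ 0 → μ j ≠ 0 → h i - h j ≤ ℓ) :
    ∑' i, μ i * Real.exp (h i) ≤ Real.exp (∑' i, μ i * h i + ℓ ^ 2 / 8) := by
  obtain ⟨i₀, hi₀⟩ := hμ.exists_ne_zero
  set a := sInf (h '' {i | μ i ≠ 0})
  have hbdd : BddBelow (h '' {i | μ i ≠ 0}) :=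
    ⟨h i₀ - ℓ, by rintro _ ⟨j, hj, rfl⟩; linarith [hosc i₀ j hi₀ hj]⟩
  have hIcc : ∀ i, μ i ≠ 0 → h i ∈ Set.Icc a (a + ℓ) := fun i hi =>
    ⟨csInf_le hbdd ⟨i, hi, rfl⟩, by
      have : h i - ℓ ≤ a := le_csInf ⟨h i₀, i₀, hi₀, rfl⟩ <| by
        rintro _ ⟨j, hj, rfl⟩; linarith [hosc i j hi hj]
      linarith⟩
  simpa using hμ.tsum_mul_exp_le_of_mem_Icc hIcc

theorem tendsto_tsum_mul {g : ℕ → ι → ℝ} {G : ι → ℝ} {M : ℝ} (hμ : IsProb μ)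
    (hb : ∀ k i, |g k i| ≤ M) (hg : ∀ i, Tendsto (fun k => g k i) atTop (𝓝 (G i))) :
    Tendsto (fun k => ∑' i, μ i * g k i) atTop (𝓝 (∑' i, μ i * G i)) :=
  tendsto_tsum_of_dominated_convergence (hμ.2.summable.mul_right M)
    (fun i => (hg i).const_mul (μ i)) (Eventually.of_forall fun k i => by
      rw [norm_mul, Real.norm_of_nonneg (hμ.1 i)]
      exact mul_le_mul_of_nonneg_left (hb k i) (hμ.1 i))

theorem tendsto_of_lipWith {d : ι → ι → ℝ} {g : ℕ → ι → ℝ} {c : ℕ → ℝ} {M m : ℝ}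
    (hμ : IsProb μ) (hc : Tendsto c atTop (𝓝 0)) (hlip : ∀ k, LipWith d (c k) (g k))
    (hb : ∀ k i, |g k i| ≤ M) (hm : ∀ k, ∑' j, μ j * g k j = m) (i : ι) :
    Tendsto (fun k => g k i) atTop (𝓝 m) := by
  have hdiff : ∀ k, ∑' j, μ j * (g k i - g k j) = g k i - m := fun k => by
    simp only [mul_sub]
    rw [(hμ.summable_mul fun _ => le_rfl).tsum_sub (hμ.summable_mul (hb k)),
      hμ.tsum_mul_const, hm k]
  have hb2 : ∀ k j, |g k i - g k j| ≤ 2 * M := fun k j => by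
    linarith [abs_sub (g k i) (g k j), hb k i, hb k j]
  have hterm : ∀ j, Tendsto (fun k => g k i - g k j) atTop (𝓝 0) := fun j =>
    squeeze_zero_norm (fun k => hlip k i j) (by simpa using hc.mul_const (d i j))
  have := hμ.tendsto_tsum_mul hb2 hterm
  simp only [hdiff, mul_zero, tsum_zero] at this
  exact tendsto_sub_nhds_zero_iff.1 this

end IsProb

namespace IsCoupling

variable {Ω : Type*} {γ : Ω × Ω → ℝ} {μ ν : Ω → ℝ}

theorem swap (hγ : IsCoupling γ μ ν) : IsCoupling (γ ∘ Prod.swap) ν μ :=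
  ⟨fun z => hγ.1 z.swap, hγ.2.2, hγ.2.1⟩

theorem summable (hγ : IsCoupling γ μ ν) (hμ : Summable μ) : Summable γ :=
  (summable_prod_of_nonneg hγ.1).2
    ⟨fun x => (hγ.2.1 x).summable, by simpa only [fun x => (hγ.2.1 x).tsum_eq] using hμ⟩

theorem hasSum_mul_fst (hγ : IsCoupling γ μ ν) (hμ : IsProb μ) {h : Ω → ℝ} {M : ℝ}
    (hb : ∀ x, |h x| ≤ M) : HasSum (fun z => γ z * h z.1) (∑' x, μ x * h x) := by
  have hs : Summable fun z => γ z * h z.1 :=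
    Summable.of_norm_bounded ((hγ.summable hμ.2.summable).mul_right M) fun z => by
      rw [norm_mul, Real.norm_of_nonneg (hγ.1 z)]
      exact mul_le_mul_of_nonneg_left (hb _) (hγ.1 z)
  convert hs.hasSum using 1
  rw [hs.tsum_prod]
  exact tsum_congr fun x => (((hγ.2.1 x).mul_right (h x)).tsum_eq).symm

theorem hasSum_mul_snd (hγ : IsCoupling γ μ ν) (hν : IsProb ν) {h : Ω → ℝ} {M : ℝ}
    (hb : ∀ x, |h x| ≤ M) : HasSum (fun z => γ z * h z.2) (∑' y, ν y * h y) :=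
  (Equiv.prodComm Ω Ω).hasSum_iff.1 (hγ.swap.hasSum_mul_fst hν hb)

theorem abs_tsum_sub_le {d : Ω → Ω → ℝ} {L M r : ℝ} {h : Ω → ℝ} (hγ : IsCoupling γ μ ν)
    (hμ : IsProb μ) (hν : IsProb ν) (hb : ∀ x, |h x| ≤ M) (hh : LipWith d L h)
    (hr : HasSum (fun z => γ z * d z.1 z.2) r) :
    |∑' x, μ x * h x - ∑' y, ν y * h y| ≤ L * r := by
  have hdiff := (hγ.hasSum_mul_fst hμ hb).sub (hγ.hasSum_mul_snd hν hb)
  have hcost := hr.mul_left L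
  have hterm : ∀ z, |γ z * h z.1 - γ z * h z.2| ≤ L * (γ z * d z.1 z.2) := fun z => by
    rw [← mul_sub, abs_mul, abs_of_nonneg (hγ.1 z), mul_left_comm]
    exact mul_le_mul_of_nonneg_left (hh z.1 z.2) (hγ.1 z)
  exact abs_le.2 ⟨neg_le.1 (hasSum_le (fun z => neg_le.1 (abs_le.1 (hterm z)).1) hdiff.neg hcost),
    hasSum_le (fun z => (abs_le.1 (hterm z)).2) hdiff hcost⟩

end IsCoupling

section Wasserstein

variable {Ω : Type*} {μ ν : Ω → ℝ}

-- Without such a coupling the infimum defining `W1` is over the empty set, hence `0`.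
def HasFiniteCostCoupling (d : Ω → Ω → ℝ) (μ ν : Ω → ℝ) : Prop :=
  ∃ γ r, IsCoupling γ μ ν ∧ HasSum (fun z : Ω × Ω => γ z * d z.1 z.2) r

theorem isCoupling_mul (hμ : IsProb μ) (hν : IsProb ν) :
    IsCoupling (fun z => μ z.1 * ν z.2) μ ν :=
  ⟨fun z => mul_nonneg (hμ.1 _) (hν.1 _), fun x => by simpa using hν.2.mul_left (μ x),
    fun y => by simpa using hμ.2.mul_right (ν y)⟩

theorem hasFiniteCostCoupling_dist [PseudoMetricSpace Ω] {Δ : ℝ} (hμ : IsProb μ)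
    (hν : IsProb ν) (hμΔ : ∀ y z, μ y ≠ 0 → μ z ≠ 0 → dist y z ≤ Δ)
    (hνΔ : ∀ y z, ν y ≠ 0 → ν z ≠ 0 → dist y z ≤ Δ) :
    HasFiniteCostCoupling (fun a b => dist a b) μ ν := by
  obtain ⟨a, ha⟩ := hμ.exists_ne_zero
  obtain ⟨b, hb⟩ := hν.exists_ne_zero
  have hγ := isCoupling_mul hμ hν
  have hcost : ∀ z : Ω × Ω, μ z.1 * ν z.2 * dist z.1 z.2 ≤
      μ z.1 * ν z.2 * (Δ + dist a b + Δ) := fun z => by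
    by_cases h₁ : μ z.1 = 0
    · simp [h₁]
    by_cases h₂ : ν z.2 = 0
    · simp [h₂]
    refine mul_le_mul_of_nonneg_left ((dist_triangle4 _ a b _).trans ?_) (hγ.1 z)
    gcongr
    · exact hμΔ _ _ h₁ ha
    · exact hνΔ _ _ hb h₂
  exact ⟨_, _, hγ, (Summable.of_nonneg_of_le (fun z => mul_nonneg (hγ.1 z) dist_nonneg) hcost
    ((hγ.summable hμ.2.summable).mul_right _)).hasSum⟩

theorem abs_tsum_sub_le_mul_W1 {d : Ω → Ω → ℝ} {L M : ℝ} {h : Ω → ℝ} (hμ : IsProb μ)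
    (hν : IsProb ν) (hb : ∀ x, |h x| ≤ M) (hL : 0 ≤ L) (hh : LipWith d L h)
    (hcoupling : HasFiniteCostCoupling d μ ν) :
    |∑' x, μ x * h x - ∑' y, ν y * h y| ≤ L * W1 d μ ν := by
  obtain ⟨γ, r, hγ, hr⟩ := hcoupling
  rw [W1, ← smul_eq_mul, ← Real.sInf_smul_of_nonneg hL]
  refine le_csInf ⟨L • r, r, ⟨γ, hγ, hr⟩, rfl⟩ ?_
  rintro _ ⟨r', ⟨γ', hγ', hr'⟩, rfl⟩
  exact hγ'.abs_tsum_sub_le hμ hν hb hh hr'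

end Wasserstein

section MarkovOperator

variable {Ω : Type*} {p : Ω → Ω → ℝ} {π : Ω → ℝ} {d : Ω → Ω → ℝ} {f h : Ω → ℝ} {M : ℝ}

def markovOp (p : Ω → Ω → ℝ) (h : Ω → ℝ) (x : Ω) : ℝ := ∑' y, p x y * h y

theorem abs_markovOp_le (hp : ∀ x, IsProb (p x)) (hb : ∀ x, |h x| ≤ M) (x : Ω) :
    |markovOp p h x| ≤ M :=
  (hp x).abs_tsum_mul_le hb

theorem lipWith_markovOp {κ L : ℝ} (hp : ∀ x, IsProb (p x))
    (hcoupling : ∀ x y, HasFiniteCostCoupling d (p x) (p y))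
    (hcurv : ∀ x y, W1 d (p x) (p y) ≤ κ * d x y) (hb : ∀ x, |h x| ≤ M) (hL : 0 ≤ L)
    (hh : LipWith d L h) : LipWith d (L * κ) (markovOp p h) := fun x y =>
  calc |markovOp p h x - markovOp p h y| ≤ L * W1 d (p x) (p y) :=
        abs_tsum_sub_le_mul_W1 (hp x) (hp y) hb hL hh (hcoupling x y)
    _ ≤ L * κ * d x y := by rw [mul_assoc]; exact mul_le_mul_of_nonneg_left (hcurv x y) hL

theorem isCoupling_stationary (hp : ∀ x, IsProb (p x)) (hπ : IsProb π)
    (hstat : ∀ y, HasSum (fun x => π x * p x y) (π y)) :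
    IsCoupling (fun z => π z.1 * p z.1 z.2) π π :=
  ⟨fun z => mul_nonneg (hπ.1 _) ((hp _).1 _), fun x => by simpa using (hp x).2.mul_left (π x),
    hstat⟩

theorem tsum_mul_markovOp (hp : ∀ x, IsProb (p x)) (hπ : IsProb π)
    (hstat : ∀ y, HasSum (fun x => π x * p x y) (π y)) (hb : ∀ x, |h x| ≤ M) :
    ∑' x, π x * markovOp p h x = ∑' x, π x * h x := by
  have hs := (isCoupling_stationary hp hπ hstat).hasSum_mul_snd hπ hb
  rw [← hs.tsum_eq, hs.summable.tsum_prod]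
  exact tsum_congr fun x => by simp only [markovOp, ← tsum_mul_left, mul_assoc]

theorem tsum_mul_exp_le_mul_tsum_mul_exp_markovOp {Δ ℓ : ℝ} (hp : ∀ x, IsProb (p x))
    (hπ : IsProb π) (hstat : ∀ y, HasSum (fun x => π x * p x y) (π y))
    (hdiam : ∀ x y z, p x y ≠ 0 → p x z ≠ 0 → d y z ≤ Δ) (hb : ∀ x, |h x| ≤ M) (hℓ : 0 ≤ ℓ)
    (hh : LipWith d ℓ h) :
    ∑' x, π x * Real.exp (h x) ≤
      Real.exp ((ℓ * Δ) ^ 2 / 8) * ∑' x, π x * Real.exp (markovOp p h x) := by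
  have hexp : ∀ x, |Real.exp (h x)| ≤ Real.exp M := fun x => by
    rw [abs_of_pos (Real.exp_pos _)]; exact Real.exp_le_exp.2 (le_of_abs_le (hb x))
  have hexpP : ∀ x, |Real.exp (markovOp p h x + (ℓ * Δ) ^ 2 / 8)| ≤
      Real.exp (M + (ℓ * Δ) ^ 2 / 8) := fun x => by
    rw [abs_of_pos (Real.exp_pos _)]
    exact Real.exp_le_exp.2 (by linarith [le_of_abs_le (abs_markovOp_le hp hb x)])
  have hosc : ∀ x y z, p x y ≠ 0 → p x z ≠ 0 → h y - h z ≤ ℓ * Δ := fun x y z hy hz =>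
    (le_abs_self _).trans ((hh y z).trans (mul_le_mul_of_nonneg_left (hdiam x y z hy hz) hℓ))
  calc ∑' x, π x * Real.exp (h x) = ∑' x, π x * markovOp p (fun y => Real.exp (h y)) x :=
        (tsum_mul_markovOp hp hπ hstat hexp).symm
    _ ≤ ∑' x, π x * Real.exp (markovOp p h x + (ℓ * Δ) ^ 2 / 8) :=
        hπ.tsum_mul_le_tsum_mul (abs_markovOp_le hp hexp) hexpP fun x =>
          (hp x).tsum_mul_exp_le_of_sub_le (hosc x)
    _ = Real.exp ((ℓ * Δ) ^ 2 / 8) * ∑' x, π x * Real.exp (markovOp p h x) := by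
        rw [← tsum_mul_left]
        exact tsum_congr fun x => by rw [Real.exp_add]; ring

theorem abs_iterate_markovOp_le (hp : ∀ x, IsProb (p x)) (hb : ∀ x, |f x| ≤ M) (k : ℕ)
    (x : Ω) : |(markovOp p)^[k] f x| ≤ M := by
  induction k generalizing x with
  | zero => exact hb x
  | succ k ih => rw [Function.iterate_succ_apply']; exact abs_markovOp_le hp ih x

theorem lipWith_iterate_markovOp {κ L : ℝ} (hp : ∀ x, IsProb (p x))
    (hcoupling : ∀ x y, HasFiniteCostCoupling d (p x) (p y))
    (hcurv : ∀ x y, W1 d (p x) (p y) ≤ κ * d x y) (hb : ∀ x, |f x| ≤ M) (hκ : 0 ≤ κ)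
    (hL : 0 ≤ L) (hf : LipWith d L f) (k : ℕ) :
    LipWith d (L * κ ^ k) ((markovOp p)^[k] f) := by
  induction k with
  | zero => simpa using hf
  | succ k ih =>
    rw [Function.iterate_succ_apply', pow_succ, ← mul_assoc]
    exact lipWith_markovOp hp hcoupling hcurv (abs_iterate_markovOp_le hp hb k) (by positivity) ih

theorem tsum_mul_iterate_markovOp (hp : ∀ x, IsProb (p x)) (hπ : IsProb π)
    (hstat : ∀ y, HasSum (fun x => π x * p x y) (π y)) (hb : ∀ x, |f x| ≤ M) (k : ℕ) :
    ∑' x, π x * (markovOp p)^[k] f x = ∑' x, π x * f x := by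
  induction k with
  | zero => rfl
  | succ k ih =>
    rw [Function.iterate_succ_apply',
      tsum_mul_markovOp hp hπ hstat (abs_iterate_markovOp_le hp hb k), ih]

theorem tsum_mul_exp_le_mul_tsum_mul_exp_iterate {Δ κ L : ℝ} (hp : ∀ x, IsProb (p x))
    (hπ : IsProb π) (hstat : ∀ y, HasSum (fun x => π x * p x y) (π y))
    (hcoupling : ∀ x y, HasFiniteCostCoupling d (p x) (p y))
    (hcurv : ∀ x y, W1 d (p x) (p y) ≤ κ * d x y)
    (hdiam : ∀ x y z, p x y ≠ 0 → p x z ≠ 0 → d y z ≤ Δ) (hb : ∀ x, |f x| ≤ M) (hκ : 0 ≤ κ)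
    (hL : 0 ≤ L) (hf : LipWith d L f) (k : ℕ) :
    ∑' x, π x * Real.exp (f x) ≤
      Real.exp ((L * Δ) ^ 2 / 8 * ∑ j ∈ Finset.range k, (κ ^ 2) ^ j) *
        ∑' x, π x * Real.exp ((markovOp p)^[k] f x) := by
  induction k with
  | zero => simp
  | succ k ih =>
    have hstep := tsum_mul_exp_le_mul_tsum_mul_exp_markovOp hp hπ hstat hdiam
      (abs_iterate_markovOp_le hp hb k) (by positivity)
      (lipWith_iterate_markovOp hp hcoupling hcurv hb hκ hL hf k)
    refine ih.trans ((mul_le_mul_of_nonneg_left hstep (Real.exp_pos _).le).trans_eq ?_)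
    rw [Finset.sum_range_succ, mul_add, Real.exp_add, Function.iterate_succ_apply']
    ring_nf

end MarkovOperator

theorem sum_range_pow_sq_one_sub_inv_le {α : ℝ} (hα : 1 ≤ α) (k : ℕ) :
    ∑ j ∈ Finset.range k, ((1 - 1/α) ^ 2) ^ j ≤ α / (2 - 1/α) := by
  have hα0 : 0 < α := by linarith
  have hκ0 : 0 ≤ 1 - 1/α := sub_nonneg.2 (div_le_one_of_le₀ hα hα0.le)
  have hκ1 : 1 - 1/α < 1 := sub_lt_self 1 (by positivity)
  calc _ ≤ ((1 - 1/α) ^ 2) ^ 0 / (1 - (1 - 1/α) ^ 2) := by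
        rw [Finset.range_eq_Ico]
        exact geom_sum_Ico_le_of_lt_one (sq_nonneg _) (pow_lt_one₀ hκ0 hκ1 two_ne_zero)
    _ = α / (2 - 1/α) := by field_simp; ring

theorem tsum_mul_exp_le_of_coarseRicci {Ω : Type*} [PseudoMetricSpace Ω] {p : Ω → Ω → ℝ}
    {π f : Ω → ℝ} {α Δ L M : ℝ} (hp : ∀ x, IsProb (p x)) (hα : 1 ≤ α)
    (hdiam : ∀ x y z, p x y ≠ 0 → p x z ≠ 0 → dist y z ≤ Δ)
    (hcurv : ∀ x y : Ω, W1 (fun a b => dist a b) (p x) (p y) ≤ (1 - 1/α) * dist x y)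
    (hπ : IsProb π) (hstat : ∀ y, HasSum (fun x => π x * p x y) (π y))
    (hb : ∀ x, |f x| ≤ M) (hL : 0 ≤ L) (hf : LipWith (fun a b => dist a b) L f) :
    ∑' x, π x * Real.exp (f x) ≤
      Real.exp (∑' x, π x * f x + Δ ^ 2 * α / (8 * (2 - 1/α)) * L ^ 2) := by
  have hκ0 : 0 ≤ 1 - 1/α := sub_nonneg.2 (div_le_one_of_le₀ hα (by linarith))
  have hκ1 : 1 - 1/α < 1 := sub_lt_self 1 (by positivity)
  have hcoupling : ∀ x y, HasFiniteCostCoupling (fun a b => dist a b) (p x) (p y) :=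
    fun x y => hasFiniteCostCoupling_dist (hp x) (hp y) (hdiam x) (hdiam y)
  have hstep : ∀ k, ∑' x, π x * Real.exp (f x) ≤
      Real.exp (Δ ^ 2 * α / (8 * (2 - 1/α)) * L ^ 2) *
        ∑' x, π x * Real.exp ((markovOp p)^[k] f x) := fun k => by
    refine (tsum_mul_exp_le_mul_tsum_mul_exp_iterate hp hπ hstat hcoupling hcurv hdiam hb hκ0
      hL hf k).trans (mul_le_mul_of_nonneg_right (Real.exp_le_exp.2 ?_)
        (tsum_nonneg fun x => mul_nonneg (hπ.1 x) (Real.exp_pos _).le))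
    calc _ ≤ (L * Δ) ^ 2 / 8 * (α / (2 - 1/α)) := by
          gcongr; exact sum_range_pow_sq_one_sub_inv_le hα k
      _ = _ := by rw [div_mul_div_comm]; ring
  have hlim : Tendsto (fun k => ∑' x, π x * Real.exp ((markovOp p)^[k] f x)) atTop
      (𝓝 (Real.exp (∑' x, π x * f x))) := by
    have hconv := hπ.tendsto_of_lipWith
      (by simpa using (tendsto_pow_atTop_nhds_zero_of_lt_one hκ0 hκ1).const_mul L)
      (lipWith_iterate_markovOp hp hcoupling hcurv hb hκ0 hL hf) (abs_iterate_markovOp_le hp hb)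
      (tsum_mul_iterate_markovOp hp hπ hstat hb)
    have hexp : ∀ k x, |Real.exp ((markovOp p)^[k] f x)| ≤ Real.exp M := fun k x => by
      rw [abs_of_pos (Real.exp_pos _)]
      exact Real.exp_le_exp.2 (le_of_abs_le (abs_iterate_markovOp_le hp hb k x))
    simpa [hπ.tsum_mul_const] using hπ.tendsto_tsum_mul hexp fun x => (hconv x).rexp
  rw [add_comm, Real.exp_add]
  exact ge_of_tendsto' (hlim.const_mul _) hstep

theorem gaussConc_of_bounded {Ω : Type*} {d : Ω → Ω → ℝ} {μ : Ω → ℝ} {c : ℝ}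
    (hμ : ∀ x, 0 ≤ μ x) (hμs : Summable μ)
    (hbdd : ∀ (f : Ω → ℝ) (L M : ℝ), 0 ≤ L → LipWith d L f → (∀ x, |f x| ≤ M) →
      ∑' x, μ x * Real.exp (f x) ≤ Real.exp (∑' x, μ x * f x + c * L ^ 2)) :
    GaussConc d μ c := by
  intro f L hL hf hsf hsef
  let clamp : ℕ → ℝ → ℝ := fun n t => max (min t n) (-n)
  have hclamp : ∀ n s t, |clamp n s - clamp n t| ≤ |s - t| := fun n s t =>
    (abs_max_sub_max_le_abs _ _ _).trans (by simpa using abs_min_sub_min_le_max s n t n)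
  have hclamp_le : ∀ n t, clamp n t ≤ max t 0 := fun n t =>
    max_le_max (min_le_left _ _) (neg_nonpos.2 n.cast_nonneg)
  have hclamp_eq : ∀ t, ∀ᶠ n : ℕ in atTop, clamp n t = t := fun t =>
    (eventually_ge_atTop ⌈|t|⌉₊).mono fun n hn => by
      have ht : |t| ≤ n := (Nat.le_ceil _).trans (Nat.cast_le.2 hn)
      simp only [clamp, min_eq_left (le_of_abs_le ht), max_eq_left (neg_le_of_abs_le ht)]
  have hmean : Tendsto (fun n : ℕ => ∑' x, μ x * clamp n (f x)) atTop
      (𝓝 (∑' x, μ x * f x)) :=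
    tendsto_tsum_of_dominated_convergence hsf.abs
      (fun x => tendsto_const_nhds.congr' ((hclamp_eq (f x)).mono fun n hn => by simp only [hn]))
      (Eventually.of_forall fun n x => by
        rw [norm_mul, abs_mul, Real.norm_eq_abs]
        gcongr
        simpa [clamp] using hclamp n (f x) 0)
  have hexp : Tendsto (fun n : ℕ => ∑' x, μ x * Real.exp (clamp n (f x))) atTop
      (𝓝 (∑' x, μ x * Real.exp (f x))) :=
    tendsto_tsum_of_dominated_convergence (hsef.add hμs)
      (fun x => tendsto_const_nhds.congr' ((hclamp_eq (f x)).mono fun n hn => by simp only [hn]))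
      (Eventually.of_forall fun n x => by
        rw [norm_mul, Real.norm_of_nonneg (hμ x), Real.norm_of_nonneg (Real.exp_pos _).le,
          ← mul_add_one]
        refine mul_le_mul_of_nonneg_left ?_ (hμ x)
        calc Real.exp (clamp n (f x)) ≤ Real.exp (max (f x) 0) :=
              Real.exp_le_exp.2 (hclamp_le n (f x))
          _ ≤ Real.exp (f x) + 1 := by
              rw [Real.exp_monotone.map_max, Real.exp_zero]
              exact max_le (le_add_of_nonneg_right zero_le_one)
                (le_add_of_nonneg_left (Real.exp_pos _).le))
  refine le_of_tendsto_of_tendsto' hexp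
    ((Real.continuous_exp.tendsto _).comp (hmean.add_const _)) fun n => ?_
  refine hbdd _ L n hL (fun x y => (hclamp n _ _).trans (hf x y)) fun x => abs_le.2 ?_
  exact ⟨le_max_right _ _, max_le (min_le_right _ _) (by linarith [n.cast_nonneg (α := ℝ)])⟩

theorem stationary_gaussian_concentration_general {Ω : Type*} [MetricSpace Ω]
    (p : Ω → Ω → ℝ) (π : Ω → ℝ) (α Δ : ℝ)
    (hp : ∀ x, IsProb (p x)) (hα : 1 ≤ α)
    (hdiam : ∀ x y z, p x y ≠ 0 → p x z ≠ 0 → dist y z ≤ Δ)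
    (hcurv : ∀ x y : Ω, W1 (fun a b => dist a b) (p x) (p y) ≤ (1 - 1/α) * dist x y)
    (hπ : IsProb π)
    (hstat : ∀ y, HasSum (fun x => π x * p x y) (π y)) :
    GaussConc (fun a b => dist a b) π (Δ ^ 2 * α / (8 * (2 - 1/α))) :=
  gaussConc_of_bounded hπ.1 hπ.2.summable fun _ _ _ hL hf hb =>
    tsum_mul_exp_le_of_coarseRicci hp hα hdiam hcurv hπ hstat hb hL hf

/-- if every one-step distribution `p(x,·)` is supported on a set of
diameter at most `Δ` and the coarse Ricci curvature is at least `1/α`, then the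
stationary measure `π` satisfies Gaussian concentration with constant
`Δ²α/(8(2−1/α))`. -/
theorem stationary_gaussian_concentration {Ω : Type*} [MetricSpace Ω] [Countable Ω]
    (p : Ω → Ω → ℝ) (π : Ω → ℝ) (α Δ : ℝ)
    (hp : ∀ x, IsProb (p x)) (hα : 1 ≤ α) (hΔ : 0 ≤ Δ)
    (hdiam : ∀ x y z, p x y ≠ 0 → p x z ≠ 0 → dist y z ≤ Δ)
    (hcurv : ∀ x y : Ω, W1 (fun a b => dist a b) (p x) (p y) ≤ (1 - 1/α) * dist x y)
    (hπ : IsProb π)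
    (hstat : ∀ y, HasSum (fun x => π x * p x y) (π y)) :
    GaussConc (fun a b => dist a b) π (Δ ^ 2 * α / (8 * (2 - 1/α))) :=
  stationary_gaussian_concentration_general p π α Δ hp hα hdiam hcurv hπ hstat
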